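/- Let n ≥ 8, let k be an integer with 0 ≤ k ≤ n−7, and set m = ⌊(n−k−3)/2⌋. For i ∈ {0,1}, let T_i(k) be the tree obtained from a path with k+3−i vertices by attaching m pendant leaves to each of its two endpoints; call the two endpoints of that path the star centers of T_i(k). Let C(k) be the graph obtained from T_1(k) by adding a new internally disjoint path of length k+2 between the two star centers of T_1(k). Then C(k) has |V(T_1(k))| + k + 1 vertices, C(k) is a k-isometric-universal graph for {T_0(k), T_1(k)}, and C(k) is not a (k+1)-isometric-universal graph for {T_0(k), T_1(k)}. -/

import Mathlib

open SimpleGraph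

/-- `φ` realizes `G` as a `k`-isometric subgraph of `U`: it is injective, maps edges to
edges, and preserves every distance whose value in `U` is at most `k` (distances take
the value `⊤` between vertices in different connected components). -/
def IsKIsometricEmbedding (k : ℕ) {V W : Type} (G : SimpleGraph V) (U : SimpleGraph W)
    (φ : V → W) : Prop :=
  Function.Injective φ ∧
  (∀ u v : V, G.Adj u v → U.Adj (φ u) (φ v)) ∧
  ∀ u v : V, U.edist (φ u) (φ v) ≤ (k : ℕ∞) → G.edist u v = U.edist (φ u) (φ v)

/-- `U` is a `k`-isometric-universal graph for the pair `{G₁, G₂}`: both `G₁` and `G₂`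
are isomorphic to `k`-isometric subgraphs of `U`. -/
def IsKIsoUniversalPair (k : ℕ) {V₁ V₂ W : Type} (G₁ : SimpleGraph V₁)
    (G₂ : SimpleGraph V₂) (U : SimpleGraph W) : Prop :=
  (∃ φ : V₁ → W, IsKIsometricEmbedding k G₁ U φ) ∧
  (∃ φ : V₂ → W, IsKIsometricEmbedding k G₂ U φ)

/-- The double broom: a path with `p` vertices (`Sum.inl 0, …, Sum.inl (p-1)`) with `m`
pendant leaves attached to each of its two endpoints (`Sum.inr (Sum.inl _)` at the
endpoint `Sum.inl 0`, and `Sum.inr (Sum.inr _)` at the endpoint `Sum.inl (p-1)`).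
For `i ∈ {0,1}`, the tree `T_i(k)` of the paper is `doubleBroom (k+3-i) m`. -/
def doubleBroom (p m : ℕ) : SimpleGraph (Fin p ⊕ (Fin m ⊕ Fin m)) :=
  SimpleGraph.fromRel fun x y =>
    match x, y with
    | Sum.inl a, Sum.inl b => (b : ℕ) = (a : ℕ) + 1
    | Sum.inl a, Sum.inr (Sum.inl _) => (a : ℕ) = 0
    | Sum.inl a, Sum.inr (Sum.inr _) => (a : ℕ) = p - 1
    | _, _ => False

/-- The graph `C(k)` of the paper: `T₁(k) = doubleBroom (k+2) m` together with a new
internally disjoint path of length `k + 2` (with `k + 1` new internal vertices) joining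
its two star centers `Sum.inl 0` and `Sum.inl (k+1)`. -/
def broomCycle (k m : ℕ) :
    SimpleGraph ((Fin (k + 2) ⊕ (Fin m ⊕ Fin m)) ⊕ Fin (k + 1)) :=
  SimpleGraph.fromRel fun x y =>
    match x, y with
    | Sum.inl a, Sum.inl b => (doubleBroom (k + 2) m).Adj a b
    | Sum.inl (Sum.inl a), Sum.inr q =>
        ((a : ℕ) = 0 ∧ (q : ℕ) = 0) ∨ ((a : ℕ) = k + 1 ∧ (q : ℕ) = k)
    | Sum.inr q, Sum.inr q' => (q' : ℕ) = (q : ℕ) + 1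
    | _, _ => False

/-!
Write `c_a` for the vertex `.inl (.inl a)` of the old spine of `C(k)`.

`T₁(k)` sits in `C(k)` as itself, and folding the new path onto the old spine is a
non-expanding retraction of `C(k)` onto it, so this copy is even isometric.

`T₀(k)` is laid with its spine along the new path, so the inner spine vertices `c₁` and `c_k`
lie off the copy. They are `k - 1` apart, hence a walk of length at most `k` between two
vertices of the copy misses one of them. For either choice there is a retraction of `C(k)` onto
`T₀(k)` that stretches only one edge at the missed vertex, so the walk is no shorter than the
distance in `T₀(k)`.

Conversely, an embedding of `T₀(k)` must send its two star centers, of degree `m + 1 ≥ 3`, to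
the only vertices of `C(k)` of degree at least three, namely `c₀` and `c_{k+1}`. These are at
distance `k + 1` in `C(k)`, while the star centers are at distance `k + 2` in `T₀(k)`.
-/

namespace SimpleGraph

variable {V W : Type*} {G : SimpleGraph V} {H : SimpleGraph W}

lemma le_edist_of_forall_walk {x y : V} {c : ℕ∞} (h : ∀ p : G.Walk x y, c ≤ p.length) :
    c ≤ G.edist x y := by
  rw [edist_eq_sInf]
  exact le_sInf <| by rintro _ ⟨p, rfl⟩; exact h p

lemma Walk.edist_le_length_of_adj_or_eq (f : V → W) {x y : V} (p : G.Walk x y)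
    (hf : ∀ a b, G.Adj a b → a ∈ p.support → b ∈ p.support →
      H.Adj (f a) (f b) ∨ f a = f b) :
    H.edist (f x) (f y) ≤ p.length := by
  induction p with
  | nil => simp
  | @cons u v w huv q ih =>
    have hq := ih fun a b hab ha hb => hf a b hab (by simp [ha]) (by simp [hb])
    have huv' := edist_le_one_iff_adj_or_eq.mpr (hf u v huv (by simp) (by simp))
    calc H.edist (f u) (f w) ≤ H.edist (f u) (f v) + H.edist (f v) (f w) :=
          SimpleGraph.edist_triangle
      _ ≤ 1 + q.length := add_le_add huv' hq
      _ = (q.cons huv).length := by push_cast [Walk.length_cons]; ring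

lemma edist_le_edist_of_adj_or_eq (f : V → W)
    (hf : ∀ a b, G.Adj a b → H.Adj (f a) (f b) ∨ f a = f b) (x y : V) :
    H.edist (f x) (f y) ≤ G.edist x y :=
  le_edist_of_forall_walk fun p => p.edist_le_length_of_adj_or_eq f fun a b h _ _ => hf a b h

lemma Hom.edist_le (f : G →g H) (x y : V) : H.edist (f x) (f y) ≤ G.edist x y :=
  edist_le_edist_of_adj_or_eq f (fun _ _ h => .inl (f.map_adj h)) x y

lemma natAbs_sub_le_edist (f : V → ℤ) (hf : ∀ a b, G.Adj a b → (f a - f b).natAbs ≤ 1)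
    (x y : V) : ((f x - f y).natAbs : ℕ∞) ≤ G.edist x y := by
  refine le_edist_of_forall_walk fun p => Nat.cast_le.mpr ?_
  induction p with
  | nil => simp
  | @cons u v w huv q ih =>
    have := hf u v huv
    rw [Walk.length_cons]
    omega

lemma Walk.edist_add_edist_le_length {x y w : V} (p : G.Walk x y) (hw : w ∈ p.support) :
    G.edist x w + G.edist w y ≤ p.length := by
  obtain ⟨q, r, rfl⟩ := Walk.mem_support_iff_exists_append.mp hw
  rw [Walk.length_append, Nat.cast_add]
  exact add_le_add (edist_le q) (edist_le r)

lemma Walk.edist_add_edist_add_edist_le_length {x y a b : V} (p : G.Walk x y)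
    (ha : a ∈ p.support) (hb : b ∈ p.support) :
    G.edist x a + G.edist a b + G.edist b y ≤ p.length ∨
      G.edist x b + G.edist b a + G.edist a y ≤ p.length := by
  obtain ⟨q, r, rfl⟩ := Walk.mem_support_iff_exists_append.mp ha
  rw [Walk.length_append, Nat.cast_add]
  rcases (Walk.mem_support_append_iff _ _).mp hb with hb | hb
  · exact .inr (add_le_add (q.edist_add_edist_le_length hb) (edist_le r))
  · exact .inl (add_assoc (G.edist x a) _ _ ▸
      add_le_add (edist_le q) (r.edist_add_edist_le_length hb))

lemma encard_neighborSet_le_of_injective (f : G →g H) (hf : Function.Injective f) (v : V) :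
    (G.neighborSet v).encard ≤ (H.neighborSet (f v)).encard :=
  Set.encard_le_encard_of_injOn (fun _ h => f.map_adj h) hf.injOn

end SimpleGraph

section doubleBroom

variable {p m : ℕ}

@[simp] lemma doubleBroom_adj_inl_inl {a b : Fin p} :
    (doubleBroom p m).Adj (.inl a) (.inl b) ↔ (b : ℕ) = a + 1 ∨ (a : ℕ) = b + 1 := by
  simp [doubleBroom, Fin.ext_iff]; omega

@[simp] lemma doubleBroom_adj_inl_inr_inl {a : Fin p} {s : Fin m} :
    (doubleBroom p m).Adj (.inl a) (.inr (.inl s)) ↔ (a : ℕ) = 0 := by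
  simp [doubleBroom]

@[simp] lemma doubleBroom_adj_inr_inl_inl {a : Fin p} {s : Fin m} :
    (doubleBroom p m).Adj (.inr (.inl s)) (.inl a) ↔ (a : ℕ) = 0 := by
  simp [doubleBroom]

@[simp] lemma doubleBroom_adj_inl_inr_inr {a : Fin p} {s : Fin m} :
    (doubleBroom p m).Adj (.inl a) (.inr (.inr s)) ↔ (a : ℕ) = p - 1 := by
  simp [doubleBroom]

@[simp] lemma doubleBroom_adj_inr_inr_inl {a : Fin p} {s : Fin m} :
    (doubleBroom p m).Adj (.inr (.inr s)) (.inl a) ↔ (a : ℕ) = p - 1 := by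
  simp [doubleBroom]

@[simp] lemma doubleBroom_not_adj_inr_inr {s t : Fin m ⊕ Fin m} :
    ¬ (doubleBroom p m).Adj (.inr s) (.inr t) := by
  rcases s with s | s <;> rcases t with t | t <;> simp [doubleBroom]

lemma doubleBroom_edist_inl_inl_le (a : Fin p) (b : ℕ) (hb : b < p) (hab : (a : ℕ) ≤ b) :
    (doubleBroom p m).edist (.inl a) (.inl ⟨b, hb⟩) ≤ ((b - a : ℕ) : ℕ∞) := by
  induction b with
  | zero =>
    obtain rfl : a = ⟨0, hb⟩ := Fin.ext (Nat.le_zero.mp hab)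
    simp
  | succ b ih =>
    rcases hab.eq_or_lt with h | h
    · obtain rfl : a = ⟨b + 1, hb⟩ := Fin.ext h
      simp
    · calc (doubleBroom p m).edist (.inl a) (.inl ⟨b + 1, hb⟩)
          ≤ (doubleBroom p m).edist (.inl a) (.inl ⟨b, by omega⟩) +
            (doubleBroom p m).edist (.inl ⟨b, by omega⟩) (.inl ⟨b + 1, hb⟩) :=
            SimpleGraph.edist_triangle
        _ ≤ ((b - a : ℕ) : ℕ∞) + 1 :=
            add_le_add (ih _ (by omega)) (edist_le_one_iff_adj_or_eq.mpr (.inl (by simp)))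
        _ = ((b + 1 - a : ℕ) : ℕ∞) := by norm_cast; omega

lemma doubleBroom_edist_inl_inl (a b : Fin p) :
    (doubleBroom p m).edist (.inl a) (.inl b) = ((a : ℤ) - b).natAbs := by
  refine le_antisymm ?_ (natAbs_sub_le_edist (Sum.elim (fun a : Fin p => (a : ℤ))
    (Sum.elim (fun _ : Fin m => (0 : ℤ)) fun _ => (p : ℤ) - 1)) ?_ (.inl a) (.inl b))
  · rcases le_total (a : ℕ) b with h | h
    · exact (doubleBroom_edist_inl_inl_le a b b.isLt h).trans_eq (by congr 1; omega)
    · rw [SimpleGraph.edist_comm]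
      exact (doubleBroom_edist_inl_inl_le b a a.isLt h).trans_eq (by congr 1; omega)
  · rintro (a | s | s) (b | t | t) h <;> simp at h ⊢ <;> omega

lemma doubleBroom_edist_first_last (hp : 0 < p) :
    (doubleBroom p m).edist (.inl ⟨0, hp⟩) (.inl ⟨p - 1, by omega⟩) = (p - 1 : ℕ) := by
  rw [doubleBroom_edist_inl_inl]; congr 1; dsimp only; omega

lemma doubleBroom_three_le_encard_neighborSet_first (hp : 2 ≤ p) (hm : 2 ≤ m) :
    3 ≤ ((doubleBroom p m).neighborSet (.inl ⟨0, by omega⟩)).encard :=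
  calc (3 : ℕ∞)
      = ({.inl ⟨1, by omega⟩, .inr (.inl ⟨0, by omega⟩), .inr (.inl ⟨1, by omega⟩)} :
        Set (Fin p ⊕ (Fin m ⊕ Fin m))).encard :=
        (Set.encard_eq_three.mpr ⟨_, _, _, by simp, by simp, by simp, rfl⟩).symm
    _ ≤ _ := Set.encard_le_encard (by simp [Set.insert_subset_iff])

lemma doubleBroom_three_le_encard_neighborSet_last (hp : 2 ≤ p) (hm : 2 ≤ m) :
    3 ≤ ((doubleBroom p m).neighborSet (.inl ⟨p - 1, by omega⟩)).encard :=
  calc (3 : ℕ∞)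
      = ({.inl ⟨p - 2, by omega⟩, .inr (.inr ⟨0, by omega⟩),
          .inr (.inr ⟨1, by omega⟩)} :
        Set (Fin p ⊕ (Fin m ⊕ Fin m))).encard :=
        (Set.encard_eq_three.mpr ⟨_, _, _, by simp, by simp, by simp, rfl⟩).symm
    _ ≤ _ := Set.encard_le_encard (by simp [Set.insert_subset_iff]; omega)

end doubleBroom

namespace broomCycle

abbrev Vertex (k m : ℕ) : Type := (Fin (k + 2) ⊕ (Fin m ⊕ Fin m)) ⊕ Fin (k + 1)

variable {k m : ℕ}

@[simp] lemma adj_inl_inl {x y : Fin (k + 2) ⊕ (Fin m ⊕ Fin m)} :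
    (broomCycle k m).Adj (.inl x) (.inl y) ↔ (doubleBroom (k + 2) m).Adj x y := by
  simp only [broomCycle, fromRel_adj, ne_eq, Sum.inl.injEq]
  exact ⟨fun h => h.2.elim id (·.symm), fun h => ⟨h.ne, .inl h⟩⟩

@[simp] lemma adj_inl_inl_inr {a : Fin (k + 2)} {j : Fin (k + 1)} :
    (broomCycle k m).Adj (.inl (.inl a)) (.inr j) ↔
      (a : ℕ) = 0 ∧ (j : ℕ) = 0 ∨ (a : ℕ) = k + 1 ∧ (j : ℕ) = k := by
  simp [broomCycle]

@[simp] lemma adj_inr_inl_inl {a : Fin (k + 2)} {j : Fin (k + 1)} :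
    (broomCycle k m).Adj (.inr j) (.inl (.inl a)) ↔
      (a : ℕ) = 0 ∧ (j : ℕ) = 0 ∨ (a : ℕ) = k + 1 ∧ (j : ℕ) = k := by
  simp [broomCycle]

@[simp] lemma not_adj_inl_inr_inr {s : Fin m ⊕ Fin m} {j : Fin (k + 1)} :
    ¬ (broomCycle k m).Adj (.inl (.inr s)) (.inr j) := by
  simp [broomCycle]

@[simp] lemma not_adj_inr_inl_inr {s : Fin m ⊕ Fin m} {j : Fin (k + 1)} :
    ¬ (broomCycle k m).Adj (.inr j) (.inl (.inr s)) := by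
  simp [broomCycle]

@[simp] lemma adj_inr_inr {i j : Fin (k + 1)} :
    (broomCycle k m).Adj (.inr i) (.inr j) ↔ (j : ℕ) = i + 1 ∨ (i : ℕ) = j + 1 := by
  simp only [broomCycle, fromRel_adj, ne_eq, Sum.inr.injEq, Fin.ext_iff]; omega

variable (k m)

def spine : Fin (k + 3) ⊕ (Fin m ⊕ Fin m) → Vertex k m
  | .inl i =>
    if (i : ℕ) = 0 then .inl (.inl ⟨0, by omega⟩)
    else if h : (i : ℕ) = k + 2 then .inl (.inl ⟨k + 1, by omega⟩)
    else .inr ⟨i - 1, by have := i.isLt; omega⟩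
  | .inr s => .inl (.inr s)

def spineHom : doubleBroom (k + 3) m →g broomCycle k m where
  toFun := spine k m
  map_rel' := by
    rintro (i | s | s) (j | t | t) h <;> simp at h <;> simp only [spine] <;> split_ifs <;>
      simp_all <;> grind

def collapse : Vertex k m → Fin (k + 2) ⊕ (Fin m ⊕ Fin m)
  | .inl x => x
  | .inr j => .inl ⟨j, by omega⟩

/-- Folds `C(k)` onto `T₀(k)` keeping `c₀, …, c_k` at spine positions `0, …, k`: only the
edge `c_k c_{k+1}` is stretched (to length two). -/
def retractLeft : Vertex k m → Fin (k + 3) ⊕ (Fin m ⊕ Fin m)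
  | .inl (.inl a) =>
    if (a : ℕ) = k + 1 then .inl ⟨k + 2, by omega⟩ else .inl ⟨a, by omega⟩
  | .inl (.inr s) => .inr s
  | .inr j => .inl ⟨j + 1, by omega⟩

/-- The mirror image of `retractLeft`: `c₁, …, c_{k+1}` go to spine positions `2, …, k + 2`,
and only the edge `c₀ c₁` is stretched. -/
def retractRight : Vertex k m → Fin (k + 3) ⊕ (Fin m ⊕ Fin m)
  | .inl (.inl a) => if (a : ℕ) = 0 then .inl ⟨0, by omega⟩ else .inl ⟨a + 1, by omega⟩
  | .inl (.inr s) => .inr s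
  | .inr j => .inl ⟨j + 1, by omega⟩

variable {k m}

lemma collapse_adj_or_eq {x y : Vertex k m}
    (h : (broomCycle k m).Adj x y) :
    (doubleBroom (k + 2) m).Adj (collapse k m x) (collapse k m y) ∨
      collapse k m x = collapse k m y := by
  rcases x with (a | s | s) | i <;> rcases y with (b | t | t) | j <;> simp at h <;>
    simp [collapse] <;> grind

lemma retractLeft_adj_or_eq {x y : Vertex k m}
    (h : (broomCycle k m).Adj x y) (hx : x ≠ .inl (.inl ⟨k, by omega⟩))
    (hy : y ≠ .inl (.inl ⟨k, by omega⟩)) :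
    (doubleBroom (k + 3) m).Adj (retractLeft k m x) (retractLeft k m y) ∨
      retractLeft k m x = retractLeft k m y := by
  rcases x with (a | s | s) | i <;> rcases y with (b | t | t) | j <;> simp at h <;>
    simp only [retractLeft] <;> (try split_ifs) <;>
    simp_all [Fin.ext_iff, -Fin.val_eq_zero_iff] <;> grind

lemma retractRight_adj_or_eq {x y : Vertex k m}
    (h : (broomCycle k m).Adj x y) (hx : x ≠ .inl (.inl ⟨1, by omega⟩))
    (hy : y ≠ .inl (.inl ⟨1, by omega⟩)) :
    (doubleBroom (k + 3) m).Adj (retractRight k m x) (retractRight k m y) ∨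
      retractRight k m x = retractRight k m y := by
  rcases x with (a | s | s) | i <;> rcases y with (b | t | t) | j <;> simp at h <;>
    simp only [retractRight] <;> (try split_ifs) <;>
    simp_all [Fin.ext_iff, -Fin.val_eq_zero_iff]

lemma retractLeft_spineHom (x : Fin (k + 3) ⊕ (Fin m ⊕ Fin m)) :
    retractLeft k m (spineHom k m x) = x := by
  rcases x with i | s
  · simp only [spineHom, RelHom.coeFn_mk, spine]
    split_ifs <;> simp [retractLeft, Fin.ext_iff, -Fin.val_eq_zero_iff] <;> omega
  · rfl

lemma retractRight_spineHom (x : Fin (k + 3) ⊕ (Fin m ⊕ Fin m)) :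
    retractRight k m (spineHom k m x) = x := by
  rcases x with i | s
  · simp only [spineHom, RelHom.coeFn_mk, spine]
    split_ifs <;> simp [retractRight, Fin.ext_iff, -Fin.val_eq_zero_iff] <;> omega
  · rfl

lemma spineHom_injective : Function.Injective (spineHom k m) :=
  Function.LeftInverse.injective retractLeft_spineHom

lemma spineHom_ne_inner (x : Fin (k + 3) ⊕ (Fin m ⊕ Fin m)) {a : Fin (k + 2)}
    (h₁ : 1 ≤ (a : ℕ)) (hₖ : (a : ℕ) ≤ k) : spineHom k m x ≠ .inl (.inl a) := by
  rcases x with i | s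
  · simp only [spineHom, RelHom.coeFn_mk, spine]
    split_ifs <;> simp [Fin.ext_iff] <;> omega
  · simp [spineHom, spine]

lemma edist_inl_inl (u v : Fin (k + 2) ⊕ (Fin m ⊕ Fin m)) :
    (broomCycle k m).edist (.inl u) (.inl v) = (doubleBroom (k + 2) m).edist u v :=
  le_antisymm
    (edist_le_edist_of_adj_or_eq Sum.inl (fun _ _ h => .inl (adj_inl_inl.mpr h)) u v)
    (edist_le_edist_of_adj_or_eq (collapse k m) (fun _ _ => collapse_adj_or_eq) (.inl u) (.inl v))

lemma add_one_le_length_of_mem_support (hk : 1 ≤ k)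
    {x y : Vertex k m} (p : (broomCycle k m).Walk x y)
    (hx₁ : x ≠ .inl (.inl ⟨1, by omega⟩)) (hxₖ : x ≠ .inl (.inl ⟨k, by omega⟩))
    (hy₁ : y ≠ .inl (.inl ⟨1, by omega⟩)) (hyₖ : y ≠ .inl (.inl ⟨k, by omega⟩))
    (h₁ : .inl (.inl ⟨1, by omega⟩) ∈ p.support)
    (hₖ : .inl (.inl ⟨k, by omega⟩) ∈ p.support) :
    k + 1 ≤ p.length := by
  have hpos {a b} (h : a ≠ b) : 1 ≤ (broomCycle k m).edist a b :=
    Order.one_le_iff_pos.mpr (edist_pos_of_ne h)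
  have hdist : (broomCycle k m).edist (.inl (.inl ⟨1, by omega⟩))
      (.inl (.inl ⟨k, by omega⟩)) = ((k - 1 : ℕ) : ℕ∞) := by
    rw [edist_inl_inl, doubleBroom_edist_inl_inl]; congr 1; dsimp only; omega
  rcases p.edist_add_edist_add_edist_le_length h₁ hₖ with h | h
  · have := (add_le_add (add_le_add (hpos hx₁) hdist.ge) (hpos hyₖ.symm)).trans h
    norm_cast at this; omega
  · rw [SimpleGraph.edist_comm] at hdist
    have := (add_le_add (add_le_add (hpos hxₖ) hdist.ge) (hpos hy₁.symm)).trans h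
    norm_cast at this; omega

lemma edist_spineHom {u v : Fin (k + 3) ⊕ (Fin m ⊕ Fin m)}
    (h : (broomCycle k m).edist (spineHom k m u) (spineHom k m v) ≤ k) :
    (doubleBroom (k + 3) m).edist u v =
      (broomCycle k m).edist (spineHom k m u) (spineHom k m v) := by
  refine le_antisymm ?_ ((spineHom k m).edist_le u v)
  obtain rfl | huv := eq_or_ne u v
  · simp
  have hk : 1 ≤ k := by
    have := (edist_pos_of_ne (spineHom_injective.ne huv)).trans_le h
    exact_mod_cast this
  obtain ⟨p, hp⟩ := exists_walk_of_edist_ne_top (h.trans_lt (ENat.natCast_lt_top k)).ne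
  rw [← hp] at h ⊢
  by_cases hₖ : .inl (.inl ⟨k, by omega⟩) ∈ p.support
  · by_cases h₁ : .inl (.inl ⟨1, by omega⟩) ∈ p.support
    · have := add_one_le_length_of_mem_support hk p (spineHom_ne_inner u le_rfl hk)
        (spineHom_ne_inner u hk le_rfl) (spineHom_ne_inner v le_rfl hk)
        (spineHom_ne_inner v hk le_rfl) h₁ hₖ
      norm_cast at h; omega
    · simpa only [retractRight_spineHom] using p.edist_le_length_of_adj_or_eq (retractRight k m)
        fun a b hab ha hb => retractRight_adj_or_eq hab (ne_of_mem_of_not_mem ha h₁)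
          (ne_of_mem_of_not_mem hb h₁)
  · simpa only [retractLeft_spineHom] using p.edist_le_length_of_adj_or_eq (retractLeft k m)
      fun a b hab ha hb => retractLeft_adj_or_eq hab (ne_of_mem_of_not_mem ha hₖ)
        (ne_of_mem_of_not_mem hb hₖ)

lemma exists_neighborSet_subset_pair {w : Vertex k m}
    (h₀ : w ≠ .inl (.inl ⟨0, by omega⟩)) (hₗ : w ≠ .inl (.inl ⟨k + 1, by omega⟩)) :
    ∃ a b, (broomCycle k m).neighborSet w ⊆ {a, b} := by
  rcases w with (a | s | s) | j
  · simp [Fin.ext_iff, -Fin.val_eq_zero_iff] at h₀ hₗ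
    refine ⟨.inl (.inl ⟨a - 1, by omega⟩), .inl (.inl ⟨a + 1, by omega⟩),
      fun y hy => ?_⟩
    rcases y with (b | t | t) | j <;> simp at hy ⊢ <;> grind
  · exact ⟨.inl (.inl ⟨0, by omega⟩), .inl (.inl ⟨0, by omega⟩), fun y hy => by
      rcases y with (b | t | t) | j <;> simp_all [Fin.ext_iff, -Fin.val_eq_zero_iff]⟩
  · exact ⟨.inl (.inl ⟨k + 1, by omega⟩), .inl (.inl ⟨k + 1, by omega⟩), fun y hy => by
      rcases y with (b | t | t) | j <;> simp_all [Fin.ext_iff, -Fin.val_eq_zero_iff]⟩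
  · refine ⟨if (j : ℕ) = 0 then .inl (.inl ⟨0, by omega⟩) else .inr ⟨j - 1, by omega⟩,
      if h : (j : ℕ) = k then .inl (.inl ⟨k + 1, by omega⟩) else .inr ⟨j + 1, by omega⟩,
      fun y hy => ?_⟩
    rcases y with (b | t | t) | j <;> simp at hy ⊢ <;> split_ifs <;> simp <;> grind

lemma eq_center_of_three_le_encard {w : Vertex k m}
    (h : 3 ≤ ((broomCycle k m).neighborSet w).encard) :
    w = .inl (.inl ⟨0, by omega⟩) ∨ w = .inl (.inl ⟨k + 1, by omega⟩) := by
  by_contra! hw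
  obtain ⟨a, b, hab⟩ := exists_neighborSet_subset_pair hw.1 hw.2
  have := h.trans ((Set.encard_le_encard hab).trans (Set.encard_insert_le _ _))
  rw [Set.encard_singleton] at this
  norm_num at this

lemma edist_hom_first_last (hm : 2 ≤ m) (f : doubleBroom (k + 3) m →g broomCycle k m)
    (hf : Function.Injective f) :
    (broomCycle k m).edist (f (.inl ⟨0, by omega⟩)) (f (.inl ⟨k + 3 - 1, by omega⟩)) =
      k + 1 := by
  have hc := encard_neighborSet_le_of_injective f hf
  have e₀ := eq_center_of_three_le_encard
    ((doubleBroom_three_le_encard_neighborSet_first (by omega) hm).trans (hc _))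
  have eₗ := eq_center_of_three_le_encard
    ((doubleBroom_three_le_encard_neighborSet_last (by omega) hm).trans (hc _))
  have hne : f (.inl ⟨0, by omega⟩) ≠ f (.inl ⟨k + 3 - 1, by omega⟩) := hf.ne (by simp)
  have hcenters : (broomCycle k m).edist (.inl (.inl ⟨0, by omega⟩))
      (.inl (.inl ⟨k + 1, by omega⟩)) = k + 1 := by
    rw [edist_inl_inl]
    exact_mod_cast doubleBroom_edist_first_last (p := k + 2) (m := m) (by omega)
  rcases e₀ with e₀ | e₀ <;> rcases eₗ with eₗ | eₗ <;> rw [e₀, eₗ] at hne ⊢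
  · exact absurd rfl hne
  · exact hcenters
  · rw [SimpleGraph.edist_comm, hcenters]
  · exact absurd rfl hne

end broomCycle

open broomCycle in
/-- With `n ≥ 8`, `0 ≤ k ≤ n - 7` and `m = ⌊(n-k-3)/2⌋`, the graph
`C(k)` has `|V(T₁(k))| + k + 1` vertices, is `k`-isometric-universal for
`{T₀(k), T₁(k)}`, but is not `(k+1)`-isometric-universal for `{T₀(k), T₁(k)}`. -/
theorem stmt_13 (n k : ℕ) (hn : 8 ≤ n) (hk : k ≤ n - 7) (m : ℕ)
    (hm : m = (n - k - 3) / 2) :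
    Nat.card ((Fin (k + 2) ⊕ (Fin m ⊕ Fin m)) ⊕ Fin (k + 1)) =
      Nat.card (Fin (k + 2) ⊕ (Fin m ⊕ Fin m)) + k + 1 ∧
    IsKIsoUniversalPair k (doubleBroom (k + 3) m) (doubleBroom (k + 2) m)
      (broomCycle k m) ∧
    ¬ IsKIsoUniversalPair (k + 1) (doubleBroom (k + 3) m) (doubleBroom (k + 2) m)
      (broomCycle k m) := by
  refine ⟨by simp; omega,
    ⟨⟨spineHom k m, spineHom_injective, fun _ _ => (spineHom k m).map_adj,
      fun _ _ => edist_spineHom⟩,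
    ⟨Sum.inl, Sum.inl_injective, fun _ _ => adj_inl_inl.mpr,
      fun u v _ => (edist_inl_inl u v).symm⟩⟩, ?_⟩
  rintro ⟨⟨φ, hφ, hadj, hdist⟩, -⟩
  have hends : (broomCycle k m).edist (φ (.inl ⟨0, by omega⟩))
      (φ (.inl ⟨k + 3 - 1, by omega⟩)) = k + 1 :=
    edist_hom_first_last (by omega) ⟨φ, hadj _ _⟩ hφ
  have := hdist _ _ hends.le
  rw [hends, doubleBroom_edist_first_last] at this
  norm_cast at this
  omega
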